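/- arXiv:1407.4504 — 6 statements merged into one kernel-verified Lean document; each statement's English description precedes it below -/
import Mathlib

section
/- A point x* ∈ X is a fixed point of the best-response map x̂ (i.e., x̂(x*) = x*) if and only if x* is a coordinate-wise stationary point of Problem (P). (Proposition 1(i).) -/
open scoped RealInnerProductSpace
open Filter MeasureTheory ProbabilityTheory

/-- The `i`-th block space `ℝ^{n i}`. -/
abbrev Blk {N : ℕ} (n : Fin N → ℕ) (i : Fin N) := EuclideanSpace ℝ (Fin (n i))

/-- The full space `ℝ^n = ℝ^{n 0} × ⋯ × ℝ^{n (N-1)}` with the Euclidean (ℓ²) norm. -/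
abbrev Full {N : ℕ} (n : Fin N → ℕ) := PiLp 2 (fun i => Blk n i)

/-- `upd x i xi` is the vector obtained from `x` by replacing its `i`-th block with `xi`. -/
noncomputable def upd {N : ℕ} {n : Fin N → ℕ} (x : Full n) (i : Fin N) (xi : Blk n i) :
    Full n :=
  WithLp.toLp 2 (Function.update x i xi)

/-- Partial gradient `∇_{x_i} F (x)` of `F` with respect to the `i`-th block. -/
noncomputable def pgrad {N : ℕ} {n : Fin N → ℕ} (F : Full n → ℝ) (x : Full n) (i : Fin N) :
    Blk n i :=
  gradient (fun z => F (upd x i z)) (x i)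

/-- `ξ` is a subgradient of `g` at `x` relative to the set `S`. -/
def IsSubgradOn {E : Type*} [NormedAddCommGroup E] [InnerProductSpace ℝ E]
    (S : Set E) (g : E → ℝ) (x ξ : E) : Prop :=
  ∀ y ∈ S, g x + ⟪ξ, y - x⟫ ≤ g y

/-- `xs` is a stationary point of `min_{x ∈ X} F x + G x`: there is a subgradient
`ξ ∈ ∂G(xs)` with `(∇F(xs) + ξ)ᵀ (y - xs) ≥ 0` for all `y ∈ X`. -/
def IsStationaryPt {N : ℕ} {n : Fin N → ℕ} (X : Set (Full n)) (F G : Full n → ℝ)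
    (xs : Full n) : Prop :=
  ∃ ξ : Full n, IsSubgradOn X G xs ξ ∧ ∀ y ∈ X, 0 ≤ ⟪gradient F xs + ξ, y - xs⟫

/-- `xs` is a coordinate-wise stationary point: for each block `i` there is a subgradient
`ξ_i` at `xs i` of the convex function `x_i ↦ G (x_i, xs_{-i})` with
`(∇_{x_i} F(xs) + ξ_i)ᵀ (y_i - xs_i) ≥ 0` for all `y_i ∈ X_i`. -/
def IsCoordStationaryPt {N : ℕ} {n : Fin N → ℕ} (Xi : ∀ i, Set (Blk n i))
    (F G : Full n → ℝ) (xs : Full n) : Prop :=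
  ∀ i, ∃ ξi : Blk n i,
    IsSubgradOn (Xi i) (fun zi => G (upd xs i zi)) (xs i) ξi ∧
    ∀ yi ∈ Xi i, 0 ≤ ⟪pgrad F xs i + ξi, yi - xs i⟫

/-! For a block `i`, the function `z ↦ F̃_i(z; x) + G(z, x_{-i})` is convex on `X_i`, and its
smooth part has gradient `∇_{x_i} F(x)` at `x_i` by (F2). So `x_i` minimizes it over `X_i` iff
`-∇_{x_i} F(x)` is a subgradient there, i.e. iff `x` is stationary in block `i`. Strong convexity
makes the minimizer `x̂_i(x)` unique, so `x_i` is a minimizer iff `x̂_i(x) = x_i`. -/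

section FirstOrder

variable {E : Type*} [NormedAddCommGroup E] [InnerProductSpace ℝ E] [CompleteSpace E]
  {s : Set E} {f g : E → ℝ} {x gx : E}

lemma HasGradientAt.le_inner_of_forall_mul_le (hf : HasGradientAt f gx x) {v : E} {c : ℝ}
    (h : ∀ t ∈ Set.Ioc (0 : ℝ) 1, t * c ≤ f (x + t • v) - f x) : c ≤ ⟪gx, v⟫ := by
  have hslope := (hf.hasFDerivAt.hasLineDerivAt v).tendsto_slope_zero_right
  refine ge_of_tendsto hslope ?_
  filter_upwards [Ioc_mem_nhdsGT (zero_lt_one' ℝ)] with t ht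
  rw [smul_eq_mul, le_inv_mul_iff₀ ht.1]
  simpa using h t ht

lemma HasGradientAt.inner_le_of_forall_le_mul (hf : HasGradientAt f gx x) {v : E} {c : ℝ}
    (h : ∀ t ∈ Set.Ioc (0 : ℝ) 1, f (x + t • v) - f x ≤ t * c) : ⟪gx, v⟫ ≤ c := by
  have hslope := (hf.hasFDerivAt.hasLineDerivAt v).tendsto_slope_zero_right
  refine le_of_tendsto hslope ?_
  filter_upwards [Ioc_mem_nhdsGT (zero_lt_one' ℝ)] with t ht
  rw [smul_eq_mul, inv_mul_le_iff₀ ht.1]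
  simpa using h t ht

lemma ConvexOn.add_inner_le_of_hasGradientAt (hf : ConvexOn ℝ s f) (hx : x ∈ s) {z : E}
    (hz : z ∈ s) (hgrad : HasGradientAt f gx x) : f x + ⟪gx, z - x⟫ ≤ f z := by
  suffices ⟪gx, z - x⟫ ≤ f z - f x by linarith
  refine hgrad.inner_le_of_forall_le_mul fun t ⟨ht0, ht1⟩ => ?_
  have hseg : x + t • (z - x) = (1 - t) • x + t • z := by module
  have hf_seg := hf.2 hx hz (sub_nonneg.2 ht1) ht0.le (sub_add_cancel 1 t)
  rw [smul_eq_mul, smul_eq_mul] at hf_seg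
  rw [hseg]
  linarith

lemma IsMinOn.isSubgradOn_neg_of_hasGradientAt (hmin : IsMinOn (fun z => f z + g z) s x)
    (hx : x ∈ s) (hf : HasGradientAt f gx x) (hg : ConvexOn ℝ s g) :
    IsSubgradOn s g x (-gx) := by
  intro y hy
  suffices g x - g y ≤ ⟪gx, y - x⟫ by rw [inner_neg_left]; linarith
  refine hf.le_inner_of_forall_mul_le fun t ⟨ht0, ht1⟩ => ?_
  have hseg : x + t • (y - x) = (1 - t) • x + t • y := by module
  have hg_seg := hg.2 hx hy (sub_nonneg.2 ht1) ht0.le (sub_add_cancel 1 t)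
  have hmin_seg := isMinOn_iff.1 hmin _ (hg.1 hx hy (sub_nonneg.2 ht1) ht0.le (sub_add_cancel 1 t))
  rw [smul_eq_mul, smul_eq_mul] at hg_seg
  rw [hseg]
  linarith

lemma isMinOn_add_of_isSubgradOn (hf : ConvexOn ℝ s f) (hx : x ∈ s)
    (hgrad : HasGradientAt f gx x) {ξ : E} (hξ : IsSubgradOn s g x ξ)
    (hvi : ∀ y ∈ s, 0 ≤ ⟪gx + ξ, y - x⟫) : IsMinOn (fun z => f z + g z) s x := by
  refine isMinOn_iff.2 fun y hy => ?_
  have hf_lin := hf.add_inner_le_of_hasGradientAt hx hy hgrad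
  have hg_lin := hξ y hy
  have hsum := hvi y hy
  rw [inner_add_left] at hsum
  exact (add_le_add hf_lin hg_lin).trans' (by linarith)

theorem isMinOn_add_iff_exists_isSubgradOn (hx : x ∈ s) (hf : ConvexOn ℝ s f)
    (hgrad : HasGradientAt f gx x) (hg : ConvexOn ℝ s g) :
    IsMinOn (fun z => f z + g z) s x ↔
      ∃ ξ, IsSubgradOn s g x ξ ∧ ∀ y ∈ s, 0 ≤ ⟪gx + ξ, y - x⟫ :=
  ⟨fun hmin => ⟨-gx, hmin.isSubgradOn_neg_of_hasGradientAt hx hgrad hg, by simp⟩,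
    fun ⟨_, hξ, hvi⟩ => isMinOn_add_of_isSubgradOn hf hx hgrad hξ hvi⟩

end FirstOrder

section Blocks

variable {N : ℕ} {n : Fin N → ℕ}

lemma upd_mem {Xi : ∀ i, Set (Blk n i)} {x : Full n} (hx : ∀ j, x j ∈ Xi j) {i : Fin N}
    {z : Blk n i} (hz : z ∈ Xi i) (j : Fin N) : upd x i z j ∈ Xi j := by
  by_cases h : j = i
  · subst h; simpa [upd] using hz
  · simpa [upd, Function.update_of_ne h] using hx j

lemma upd_add_smul (x : Full n) (i : Fin N) (z₁ z₂ : Blk n i) {a b : ℝ} (hab : a + b = 1) :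
    upd x i (a • z₁ + b • z₂) = a • upd x i z₁ + b • upd x i z₂ := by
  refine PiLp.ext fun j => ?_
  by_cases h : j = i
  · subst h; simp [upd]
  · simp only [upd, WithLp.ofLp_toLp, Function.update_of_ne h, PiLp.add_apply, PiLp.smul_apply]
    rw [← add_smul, hab, one_smul]

lemma ConvexOn.comp_upd {Xi : ∀ i, Set (Blk n i)} {G : Full n → ℝ}
    (hG : ConvexOn ℝ {x : Full n | ∀ j, x j ∈ Xi j} G) {x : Full n} (hx : ∀ j, x j ∈ Xi j)
    {i : Fin N} (hXi : Convex ℝ (Xi i)) : ConvexOn ℝ (Xi i) (fun z => G (upd x i z)) := by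
  refine ⟨hXi, fun z₁ hz₁ z₂ hz₂ a b ha hb hab => ?_⟩
  simp only [upd_add_smul x i z₁ z₂ hab]
  exact hG.2 (upd_mem hx hz₁) (upd_mem hx hz₂) ha hb hab

end Blocks

theorem fixedPoint_iff_coordStationary_general
    {N : ℕ} {n : Fin N → ℕ} (Xi : ∀ i, Set (Blk n i))
    (X : Set (Full n)) (hXdef : X = {x : Full n | ∀ i, x i ∈ Xi i})
    (F G : Full n → ℝ) (Ftil : ∀ i, Blk n i → Full n → ℝ)
    -- (A1) each X_i is nonempty, closed and convex
    (hXi : ∀ i, (Xi i).Nonempty ∧ IsClosed (Xi i) ∧ Convex ℝ (Xi i))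
    -- (A4) G is convex and continuous on X
    (hGconv : ConvexOn ℝ X G)
    -- (F1) each F̃_i(·; w) is strongly convex on X_i with constant q > 0, and differentiable
    (q : ℝ) (hq : 0 < q)
    (hF1 : ∀ i, ∀ w ∈ X, StrongConvexOn (Xi i) q (fun z => Ftil i z w))
    (hFtildiff : ∀ i, ∀ w ∈ X, Differentiable ℝ (fun z => Ftil i z w))
    -- (F2) gradient consistency: ∇F̃_i(x_i; x) = ∇_{x_i} F(x) for all x ∈ X
    (hF2 : ∀ i, ∀ x ∈ X, gradient (fun z => Ftil i z x) (x i) = pgrad F x i)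
    -- the best-response map: x̂_i(y) minimizes F̃_i(·; y) + G(·, y_{-i}) over X_i
    (xhat : Full n → Full n)
    (hxhat : ∀ y ∈ X, ∀ i, xhat y i ∈ Xi i ∧
      ∀ zi ∈ Xi i, Ftil i (xhat y i) y + G (upd y i (xhat y i)) ≤ Ftil i zi y + G (upd y i zi))
    -- the point under consideration
    (xs : Full n) (hxs : xs ∈ X) :
    xhat xs = xs ↔ IsCoordStationaryPt Xi F G xs := by
  subst hXdef
  rw [PiLp.ext_iff]
  refine forall_congr' fun i => ?_
  obtain ⟨hxhat_mem, hxhat_min⟩ := hxhat xs hxs i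
  have hgrad : HasGradientAt (fun z => Ftil i z xs) (pgrad F xs i) (xs i) :=
    hF2 i xs hxs ▸ (hFtildiff i xs hxs (xs i)).hasGradientAt
  have hFtil_i := (hF1 i xs hxs).strictConvexOn hq
  have hG_i := hGconv.comp_upd hxs (hXi i).2.2
  rw [← isMinOn_add_iff_exists_isSubgradOn (hxs i) hFtil_i.convexOn hgrad hG_i]
  constructor
  · intro hfix
    exact isMinOn_iff.2 (hfix ▸ hxhat_min)
  · intro hmin
    exact (hFtil_i.add_convexOn hG_i).eq_of_isMinOn (isMinOn_iff.2 hxhat_min) hmin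
      hxhat_mem (hxs i)

/-- **Proposition 1(i).** Under the blanket assumptions A1–A5 on Problem (P) and F1–F3 on the
approximants, a point `xs ∈ X` is a fixed point of the best-response map `x̂` if and only if
`xs` is a coordinate-wise stationary point of Problem (P). -/
theorem fixedPoint_iff_coordStationary
    {N : ℕ} {n : Fin N → ℕ} (Xi : ∀ i, Set (Blk n i))
    (X : Set (Full n)) (hXdef : X = {x : Full n | ∀ i, x i ∈ Xi i})
    (F G : Full n → ℝ) (Ftil : ∀ i, Blk n i → Full n → ℝ)
    -- (A1) each X_i is nonempty, closed and convex
    (hXi : ∀ i, (Xi i).Nonempty ∧ IsClosed (Xi i) ∧ Convex ℝ (Xi i))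
    -- (A2) F is C¹ on an open set containing X
    (U : Set (Full n)) (hUopen : IsOpen U) (hXU : X ⊆ U) (hFC1 : ContDiffOn ℝ 1 F U)
    -- (A3) ∇F is Lipschitz continuous on X with constant L_F
    (L_F : ℝ)
    (hLF : ∀ a ∈ X, ∀ b ∈ X, ‖gradient F a - gradient F b‖ ≤ L_F * ‖a - b‖)
    -- (A4) G is convex and continuous on X
    (hGconv : ConvexOn ℝ X G) (hGcont : ContinuousOn G X)
    -- (A5) V = F + G is coercive
    (hcoercive : Tendsto (fun x => F x + G x) (cocompact (Full n)) atTop)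
    -- (F1) each F̃_i(·; w) is strongly convex on X_i with constant q > 0, and differentiable
    (q : ℝ) (hq : 0 < q)
    (hF1 : ∀ i, ∀ w ∈ X, StrongConvexOn (Xi i) q (fun z => Ftil i z w))
    (hFtildiff : ∀ i, ∀ w ∈ X, Differentiable ℝ (fun z => Ftil i z w))
    -- (F2) gradient consistency: ∇F̃_i(x_i; x) = ∇_{x_i} F(x) for all x ∈ X
    (hF2 : ∀ i, ∀ x ∈ X, gradient (fun z => Ftil i z x) (x i) = pgrad F x i)
    -- (F3) ∇F̃_i(z; ·) is Lipschitz continuous on X, uniformly in z ∈ X_i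
    (L_B : ℝ)
    (hF3 : ∀ i, ∀ z ∈ Xi i, ∀ w ∈ X, ∀ w' ∈ X,
      ‖gradient (fun u => Ftil i u w) z - gradient (fun u => Ftil i u w') z‖ ≤ L_B * ‖w - w'‖)
    -- the best-response map: x̂_i(y) minimizes F̃_i(·; y) + G(·, y_{-i}) over X_i
    (xhat : Full n → Full n)
    (hxhat : ∀ y ∈ X, ∀ i, xhat y i ∈ Xi i ∧
      ∀ zi ∈ Xi i, Ftil i (xhat y i) y + G (upd y i (xhat y i)) ≤ Ftil i zi y + G (upd y i zi))
    -- the point under consideration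
    (xs : Full n) (hxs : xs ∈ X) :
    xhat xs = xs ↔ IsCoordStationaryPt Xi F G xs :=
  fixedPoint_iff_coordStationary_general Xi X hXdef F G Ftil hXi hGconv q hq hF1 hFtildiff hF2 xhat
    hxhat xs hxs
end

section
/- If G is convex on X and differentiable on a neighborhood of a point x* ∈ X that is a coordinate-wise stationary point of Problem (P), then x* is a stationary point of Problem (P). -/
open scoped RealInnerProductSpace
open Filter MeasureTheory ProbabilityTheory

/-! The witness is `ξ = ∇G(xs)`, a subgradient because `G` is convex and differentiable. The inner
product on `Full n` is the sum of the blockwise ones and the partial gradients are the blocks of the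
full gradients, so it suffices that `⟪ξ_i, y_i - xs_i⟫ ≤ ⟪(∇G(xs))_i, y_i - xs_i⟫` for the block
subgradients `ξ_i`. This is the first-order optimality condition at `xs_i` for
`z ↦ G(z, xs_{-i}) - ⟪ξ_i, z⟫`, which is minimized over the convex set `X_i` at `xs_i`. -/

section Subgradient

variable {E : Type*} [NormedAddCommGroup E] {S : Set E} {g : E → ℝ} {x y ξ : E}

theorem ConvexOn.fderiv_sub_le [NormedSpace ℝ E] (hg : ConvexOn ℝ S g) (hx : x ∈ S) (hy : y ∈ S)
    (hgx : DifferentiableAt ℝ g x) : fderiv ℝ g x (y - x) ≤ g y - g x := by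
  set φ := g ∘ AffineMap.lineMap (k := ℝ) x y
  have hφ : ConvexOn ℝ (AffineMap.lineMap x y ⁻¹' S) φ := hg.comp_affineMap _
  have hφ' : HasDerivAt φ (fderiv ℝ g x (y - x)) 0 := by
    have hgx' : HasFDerivAt g (fderiv ℝ g x) (AffineMap.lineMap x y (0 : ℝ)) := by
      simpa using hgx.hasFDerivAt
    exact hgx'.comp_hasDerivAt 0 AffineMap.hasDerivAt_lineMap
  simpa [φ, slope_def_field] using
    hφ.le_slope_of_hasDerivAt (by simpa using hx) (by simpa using hy) zero_lt_one hφ'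

variable [InnerProductSpace ℝ E] [CompleteSpace E]

theorem ConvexOn.isSubgradOn_gradient (hg : ConvexOn ℝ S g) (hx : x ∈ S)
    (hgx : DifferentiableAt ℝ g x) : IsSubgradOn S g x (gradient g x) := fun y hy => by
  have := hg.fderiv_sub_le hx hy hgx
  rw [inner_gradient_left]
  linarith

theorem IsSubgradOn.inner_le_inner_gradient (h : IsSubgradOn S g x ξ) (hS : Convex ℝ S)
    (hx : x ∈ S) (hy : y ∈ S) (hgx : DifferentiableAt ℝ g x) :
    ⟪ξ, y - x⟫ ≤ ⟪gradient g x, y - x⟫ := by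
  have hmin : IsMinOn (fun z => g z - ⟪ξ, z - x⟫) S x := fun z hz => by
    simpa [le_sub_iff_add_le] using h z hz
  have hderiv : HasFDerivAt (fun z => g z - ⟪ξ, z - x⟫) (fderiv ℝ g x - innerSL ℝ ξ) x := by
    refine hgx.hasFDerivAt.sub ?_
    simp_rw [inner_sub_right]
    exact ((innerSL ℝ ξ).hasFDerivAt (x := x)).sub_const ⟪ξ, x⟫
  have := hmin.localize.hasFDerivWithinAt_nonneg hderiv.hasFDerivWithinAt
    (sub_mem_posTangentConeAt_of_segment_subset (hS.segment_subset hx hy))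
  rw [inner_gradient_left]
  simpa using this

end Subgradient

theorem PiLp.inner_single_right {𝕜 ι : Type*} [RCLike 𝕜] [Fintype ι] [DecidableEq ι]
    {β : ι → Type*} [∀ i, NormedAddCommGroup (β i)] [∀ i, InnerProductSpace 𝕜 (β i)]
    (w : PiLp 2 β) (i : ι) (v : β i) : inner 𝕜 w (PiLp.single 2 i v) = inner 𝕜 (w i) v := by
  rw [PiLp.inner_apply, Finset.sum_eq_single i] <;> simp_all [PiLp.single_eq_of_ne]

theorem hasFDerivAt_upd {N : ℕ} {n : Fin N → ℕ} (x : Full n) (i : Fin N) (z : Blk n i) :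
    HasFDerivAt (upd x i) ((PiLp.continuousLinearEquiv 2 ℝ (Blk n)).symm.toContinuousLinearMap ∘L
      .pi (Pi.single i (.id ℝ (Blk n i)))) z :=
  (PiLp.continuousLinearEquiv 2 ℝ (Blk n)).symm.hasFDerivAt.comp z (hasFDerivAt_update x.ofLp z)

theorem hasGradientAt_comp_upd {N : ℕ} {n : Fin N → ℕ} {F : Full n → ℝ} {x : Full n}
    (hF : DifferentiableAt ℝ F x) (i : Fin N) :
    HasGradientAt (fun z => F (upd x i z)) (gradient F x i) (x i) := by
  have hF' : HasFDerivAt F (fderiv ℝ F x) (upd x i (x i)) := by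
    rw [upd, Function.update_eq_self]
    exact hF.hasFDerivAt
  convert (hF'.comp (x i) (hasFDerivAt_upd x i (x i))).hasGradientAt using 1
  · rfl
  refine ext_inner_right ℝ (E := Blk n i) fun v => ?_
  rw [InnerProductSpace.toDual_symm_apply, ← PiLp.inner_single_right, inner_gradient_left,
    ContinuousLinearMap.comp_apply]
  congr 1
  ext j
  rcases eq_or_ne j i with rfl | h <;> simp [*]

theorem coordStationary_of_differentiable_general
    {N : ℕ} {n : Fin N → ℕ} (Xi : ∀ i, Set (Blk n i))
    (X : Set (Full n)) (hXdef : X = {x : Full n | ∀ i, x i ∈ Xi i})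
    (F G : Full n → ℝ)
    -- each X_i is nonempty, closed and convex
    (hXi : ∀ i, (Xi i).Nonempty ∧ IsClosed (Xi i) ∧ Convex ℝ (Xi i))
    -- F is C¹ on an open set containing X
    (U : Set (Full n)) (hUopen : IsOpen U) (hXU : X ⊆ U) (hFC1 : ContDiffOn ℝ 1 F U)
    -- G is convex and continuous on X
    (hGconv : ConvexOn ℝ X G)
    -- the point under consideration
    (xs : Full n) (hxs : xs ∈ X)
    -- G is differentiable on a neighborhood of xs
    (W : Set (Full n)) (hWopen : IsOpen W) (hxsW : xs ∈ W) (hGdiff : DifferentiableOn ℝ G W)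
    (hcoord : IsCoordStationaryPt Xi F G xs) :
    IsStationaryPt X F G xs := by
  have hF : DifferentiableAt ℝ F xs :=
    (hFC1.contDiffAt (hUopen.mem_nhds (hXU hxs))).differentiableAt one_ne_zero
  have hG : DifferentiableAt ℝ G xs := hGdiff.differentiableAt (hWopen.mem_nhds hxsW)
  refine ⟨gradient G xs, hGconv.isSubgradOn_gradient hxs hG, fun y hy => ?_⟩
  subst hXdef
  rw [PiLp.inner_apply]
  refine Finset.sum_nonneg fun i _ => ?_
  obtain ⟨ξi, hsub, hstat⟩ := hcoord i
  have hGi := hasGradientAt_comp_upd hG i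
  have hξi : ⟪ξi, y i - xs i⟫ ≤ ⟪gradient G xs i, y i - xs i⟫ := by
    simpa only [hGi.gradient] using
      hsub.inner_le_inner_gradient (hXi i).2.2 (hxs i) (hy i) hGi.differentiableAt
  have hFi : pgrad F xs i = gradient F xs i := (hasGradientAt_comp_upd hF i).gradient
  have hstat_i := hstat (y i) (hy i)
  rw [hFi, inner_add_left] at hstat_i
  rw [PiLp.add_apply, PiLp.sub_apply, inner_add_left]
  linarith

/-- If `G` is convex on `X` and differentiable on a neighborhood of a point `xs ∈ X` that is
a coordinate-wise stationary point of Problem (P), then `xs` is a stationary point of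
Problem (P). -/
theorem coordStationary_of_differentiable
    {N : ℕ} {n : Fin N → ℕ} (Xi : ∀ i, Set (Blk n i))
    (X : Set (Full n)) (hXdef : X = {x : Full n | ∀ i, x i ∈ Xi i})
    (F G : Full n → ℝ)
    -- each X_i is nonempty, closed and convex
    (hXi : ∀ i, (Xi i).Nonempty ∧ IsClosed (Xi i) ∧ Convex ℝ (Xi i))
    -- F is C¹ on an open set containing X
    (U : Set (Full n)) (hUopen : IsOpen U) (hXU : X ⊆ U) (hFC1 : ContDiffOn ℝ 1 F U)
    -- G is convex and continuous on X
    (hGconv : ConvexOn ℝ X G) (hGcont : ContinuousOn G X)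
    -- the point under consideration
    (xs : Full n) (hxs : xs ∈ X)
    -- G is differentiable on a neighborhood of xs
    (W : Set (Full n)) (hWopen : IsOpen W) (hxsW : xs ∈ W) (hGdiff : DifferentiableOn ℝ G W)
    (hcoord : IsCoordStationaryPt Xi F G xs) :
    IsStationaryPt X F G xs :=
  coordStationary_of_differentiable_general Xi X hXdef F G hXi U hUopen hXU hFC1 hGconv xs hxs W
    hWopen hxsW hGdiff hcoord
end

section
/- Let (Ω, ℱ, P) be a probability space and (A_k)_{k∈ℕ} a sequence of mutually independent events with P(A_k) ≥ p for all k, for some p > 0. Let (γ_k)_{k∈ℕ} be a deterministic sequence with γ_k ∈ (0,1] for all k, γ_k → 0, and ∑_{k=0}^∞ γ_k = +∞. Then P( ∑_{k : ω ∈ A_k} γ_k < +∞ ) = 0; that is, almost surely the sum of γ_k over the random index set {k : ω ∈ A_k} diverges. -/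
/-!
Put `c = 1 - exp (-1)`. Convexity of `exp` gives `1 - exp (-γ) ≥ c γ` for `γ ∈ [0, 1]`, so the
moment generating function at `-1` of `γ_k 1_{A_k}` is at most `exp (-c p γ_k)`, and by
independence that of `S_n = ∑_{k<n} γ_k 1_{A_k}` is at most `exp (-c p ∑_{k<n} γ_k) → 0`.
Where the series converges, all `S_n` stay below some integer `m`, and the Chernoff bound
`P (S_n ≤ m) ≤ exp m * E[exp (-S_n)]` shows that each such event is null.
-/

open Filter MeasureTheory ProbabilityTheory Real Finset

lemma mul_le_one_sub_exp_neg {x : ℝ} (hx0 : 0 ≤ x) (hx1 : x ≤ 1) :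
    (1 - exp (-1)) * x ≤ 1 - exp (-x) := by
  have h := convexOn_exp.2 (Set.mem_univ (-1)) (Set.mem_univ 0) hx0 (sub_nonneg.2 hx1)
    (add_sub_cancel x 1)
  simp only [smul_eq_mul, mul_neg_one, mul_zero, add_zero, exp_zero, mul_one] at h
  linarith

namespace ProbabilityTheory

variable {Ω : Type*} [MeasurableSpace Ω] {P : Measure Ω}

lemma mgf_indicator_const [IsProbabilityMeasure P] {A : Set Ω} (hA : MeasurableSet A) (a t : ℝ) :
    mgf (A.indicator fun _ => a) P t = 1 - P.real A * (1 - exp (t * a)) := by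
  have hexp : (fun ω => exp (t * A.indicator (fun _ => a) ω))
      = fun ω => A.indicator (fun _ => exp (t * a) - 1) ω + 1 := by
    ext ω
    by_cases h : ω ∈ A <;> simp [h]
  rw [mgf, hexp, integral_add ((integrable_const _).indicator hA) (integrable_const _),
    integral_indicator_const _ hA]
  simp only [smul_eq_mul, integral_const, probReal_univ]
  ring

lemma mgf_indicator_const_neg_one_le [IsProbabilityMeasure P] {A : Set Ω} (hA : MeasurableSet A)
    {q γ : ℝ} (hq : q ≤ P.real A) (hγ0 : 0 ≤ γ) (hγ1 : γ ≤ 1) :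
    mgf (A.indicator fun _ => γ) P (-1) ≤ exp (-((1 - exp (-1)) * q * γ)) := by
  have hgap : (1 - exp (-1)) * γ ≤ 1 - exp (-γ) := mul_le_one_sub_exp_neg hγ0 hγ1
  have hc : 0 ≤ (1 - exp (-1)) * γ :=
    mul_nonneg (sub_nonneg.2 (exp_le_one_iff.2 (by norm_num))) hγ0
  calc mgf (A.indicator fun _ => γ) P (-1) = 1 - P.real A * (1 - exp (-γ)) := by
        rw [mgf_indicator_const hA, neg_one_mul]
    _ ≤ 1 - (1 - exp (-1)) * q * γ := by
        nlinarith [measureReal_nonneg (μ := P) (s := A)]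
    _ ≤ exp (-((1 - exp (-1)) * q * γ)) := one_sub_le_exp_neg _

lemma iIndepSet.iIndepFun_indicator_const {ι : Type*} {A : ι → Set Ω} (hIndep : iIndepSet A P)
    (a : ι → ℝ) : iIndepFun (fun k => (A k).indicator fun _ => a k) P := by
  convert (hIndep.iIndepFun_indicator (β := ℝ)).comp (fun k x => a k * x)
    (fun k => measurable_const_mul _) using 2 with k
  ext ω
  by_cases h : ω ∈ A k <;> simp [h]

lemma iIndepSet.mgf_sum_indicator_const_neg_one_le [IsProbabilityMeasure P] {ι : Type*}
    {A : ι → Set Ω} (hA : ∀ k, MeasurableSet (A k)) (hIndep : iIndepSet A P) {q : ℝ}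
    (hq : ∀ k, q ≤ P.real (A k)) {γ : ι → ℝ} (hγ : ∀ k, γ k ∈ Set.Icc 0 1) (s : Finset ι) :
    mgf (∑ k ∈ s, (A k).indicator fun _ => γ k) P (-1)
      ≤ exp (-((1 - exp (-1)) * q * ∑ k ∈ s, γ k)) := by
  rw [(hIndep.iIndepFun_indicator_const γ).mgf_sum (fun k => measurable_const.indicator (hA k)),
    Finset.mul_sum, ← sum_neg_distrib, exp_sum]
  exact prod_le_prod (fun k _ => mgf_nonneg)
    fun k _ => mgf_indicator_const_neg_one_le (hA k) (hq k) (hγ k).1 (hγ k).2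

lemma measure_setOf_summable_eq_zero_of_tendsto_mgf [IsFiniteMeasure P] {X : ℕ → Ω → ℝ}
    (hX : ∀ k, Measurable (X k)) (hX0 : ∀ k ω, 0 ≤ X k ω)
    (hmgf : Tendsto (fun n => mgf (∑ k ∈ range n, X k) P (-1)) atTop (nhds 0)) :
    P {ω | Summable fun k => X k ω} = 0 := by
  have hcover : {ω | Summable fun k => X k ω}
      ⊆ ⋃ m : ℕ, ⋂ n, {ω | ∑ k ∈ range n, X k ω ≤ m} := by
    intro ω hω
    exact Set.mem_iUnion.2 ⟨⌈∑' k, X k ω⌉₊, Set.mem_iInter.2 fun n =>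
      (hω.sum_le_tsum _ fun k _ => hX0 k ω).trans (Nat.le_ceil _)⟩
  refine measure_mono_null hcover (measure_iUnion_null fun m => ?_)
  rw [← measureReal_eq_zero_iff]
  refine le_antisymm (ge_of_tendsto (by simpa using hmgf.const_mul (exp m))
    (Eventually.of_forall fun n => ?_)) measureReal_nonneg
  have hint : Integrable (fun ω => exp (-1 * (∑ k ∈ range n, X k) ω)) P := by
    refine .of_bound (by fun_prop) 1 (Eventually.of_forall fun ω => ?_)
    rw [norm_of_nonneg (exp_nonneg _), exp_le_one_iff, Finset.sum_apply]
    linarith [sum_nonneg fun k (_ : k ∈ range n) => hX0 k ω]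
  calc P.real (⋂ n, {ω | ∑ k ∈ range n, X k ω ≤ m})
      ≤ P.real {ω | ∑ k ∈ range n, X k ω ≤ m} := measureReal_mono (Set.iInter_subset _ n)
    _ ≤ exp m * mgf (∑ k ∈ range n, X k) P (-1) := by
        simpa using measure_le_le_exp_mul_mgf (m : ℝ) (by norm_num) hint

end ProbabilityTheory

theorem measure_summable_over_random_set_eq_zero_general
    {Ω : Type*} [MeasurableSpace Ω] (P : Measure Ω) [IsProbabilityMeasure P]
    (A : ℕ → Set Ω) (hA : ∀ k, MeasurableSet (A k))
    (hIndep : iIndepSet A P)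
    (p : ℝ) (hp : 0 < p) (hAp : ∀ k, ENNReal.ofReal p ≤ P (A k))
    (γ : ℕ → ℝ) (hγ1 : ∀ k, γ k ∈ Set.Ioc (0 : ℝ) 1)
    (hγ3 : Tendsto (fun m => ∑ k ∈ Finset.range m, γ k) atTop atTop) :
    P {ω | Summable fun k => Set.indicator (A k) (fun _ => γ k) ω} = 0 := by
  have hpA : ∀ k, p ≤ P.real (A k) := fun k =>
    (ENNReal.ofReal_le_iff_le_toReal (measure_ne_top P _)).1 (hAp k)
  have hrate : 0 < (1 - exp (-1)) * p :=
    mul_pos (sub_pos.2 (exp_lt_one_iff.2 (by norm_num))) hp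
  refine measure_setOf_summable_eq_zero_of_tendsto_mgf
    (fun k => measurable_const.indicator (hA k))
    (fun k => Set.indicator_nonneg fun _ _ => (hγ1 k).1.le) ?_
  refine squeeze_zero (fun n => mgf_nonneg) (fun n => hIndep.mgf_sum_indicator_const_neg_one_le hA
    hpA (fun k => Set.Ioc_subset_Icc_self (hγ1 k)) (range n)) ?_
  exact tendsto_exp_atBot.comp (tendsto_neg_atTop_atBot.comp (hγ3.const_mul_atTop hrate))

/-- **Almost-sure nonsummability over a random index set.** Let `(Ω, ℱ, P)` be a probability
space and `(A_k)` a sequence of mutually independent events with `P(A_k) ≥ p` for all `k`, for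
some `p > 0`. Let `(γ_k)` be a deterministic sequence with `γ_k ∈ (0,1]`, `γ_k → 0` and
`∑_k γ_k = +∞`. Then `P(∑_{k : ω ∈ A_k} γ_k < +∞) = 0`: almost surely, the sum of `γ_k` over
the random index set `{k | ω ∈ A_k}` diverges. -/
theorem measure_summable_over_random_set_eq_zero
    {Ω : Type*} [MeasurableSpace Ω] (P : Measure Ω) [IsProbabilityMeasure P]
    (A : ℕ → Set Ω) (hA : ∀ k, MeasurableSet (A k))
    (hIndep : iIndepSet A P)
    (p : ℝ) (hp : 0 < p) (hAp : ∀ k, ENNReal.ofReal p ≤ P (A k))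
    (γ : ℕ → ℝ) (hγ1 : ∀ k, γ k ∈ Set.Ioc (0 : ℝ) 1)
    (hγ2 : Tendsto γ atTop (nhds 0))
    (hγ3 : Tendsto (fun m => ∑ k ∈ Finset.range m, γ k) atTop atTop) :
    P {ω | Summable fun k => Set.indicator (A k) (fun _ => γ k) ω} = 0 :=
  measure_summable_over_random_set_eq_zero_general P A hA hIndep p hp hAp γ hγ1 hγ3
end

section
/- Suppose G is separable: G(x) = ∑_{i=1}^N G_i(x_i) with each G_i convex and continuous on X_i. Then the best-response mapping y ↦ x̂(y) is Lipschitz continuous on X: there exists a constant L̂ > 0 such that ‖x̂(y) − x̂(z)‖ ≤ L̂ ‖y − z‖ for all y, z ∈ X. -/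
/-! Fix a block `i` and parameters `y, w ∈ X`, and let `u, v` be the two best responses. Each
objective `F̃_i(·; y) + G_i` is `q`-strongly convex, so it grows at least like `q/2 ‖· - u‖²` away
from its minimizer `u` (and likewise at `v`). Adding the two growth inequalities cancels `G_i` and
leaves `q ‖u - v‖² ≤ h v - h u` with `h = F̃_i(·; y) - F̃_i(·; w)`; by (F3) and the mean value
theorem the right-hand side is at most `L_B ‖y - w‖ ‖u - v‖`. So every block of `x̂` moves by at
most `(L_B / q) ‖y - w‖`, and the whole vector by at most `√N` times that. -/

open scoped RealInnerProductSpace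
open Filter MeasureTheory ProbabilityTheory

open Topology

lemma gradient_sub {𝕜 F : Type*} [RCLike 𝕜] [NormedAddCommGroup F] [InnerProductSpace 𝕜 F]
    [CompleteSpace F] {f g : F → 𝕜} {x : F} (hf : DifferentiableAt 𝕜 f x)
    (hg : DifferentiableAt 𝕜 g x) : gradient (f - g) x = gradient f x - gradient g x := by
  simp only [gradient, fderiv_sub hf hg, map_sub]

lemma Convex.norm_image_sub_le_of_norm_gradient_le {E : Type*} [NormedAddCommGroup E]
    [InnerProductSpace ℝ E] [CompleteSpace E] {s : Set E} {f : E → ℝ} {C : ℝ}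
    (hs : Convex ℝ s) (hf : ∀ x ∈ s, DifferentiableAt ℝ f x) (bound : ∀ x ∈ s, ‖gradient f x‖ ≤ C)
    {x y : E} (hx : x ∈ s) (hy : y ∈ s) : ‖f y - f x‖ ≤ C * ‖y - x‖ :=
  hs.norm_image_sub_le_of_norm_fderiv_le hf
    (fun z hz => by simpa only [← toDual_gradient, LinearIsometryEquiv.norm_map] using bound z hz)
    hx hy

lemma PiLp.norm_le_sqrt_card_mul {ι : Type*} [Fintype ι] {β : ι → Type*}
    [∀ i, SeminormedAddCommGroup (β i)] (x : PiLp 2 β) {C : ℝ} (hC : 0 ≤ C)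
    (h : ∀ i, ‖x i‖ ≤ C) : ‖x‖ ≤ √(Fintype.card ι) * C := by
  calc ‖x‖ = √(∑ i, ‖x i‖ ^ 2) := PiLp.norm_eq_of_L2 x
    _ ≤ √(∑ _ : ι, C ^ 2) := by gcongr with i; exact h i
    _ = √(Fintype.card ι) * C := by
      rw [Finset.sum_const, Finset.card_univ, nsmul_eq_mul, Real.sqrt_mul (Nat.cast_nonneg _),
        Real.sqrt_sq hC]

section StrongConvexOn

variable {E : Type*} [NormedAddCommGroup E] [NormedSpace ℝ E] {s : Set E} {m : ℝ} {f g : E → ℝ}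
  {u v : E}

lemma StrongConvexOn.add_convexOn (hf : StrongConvexOn s m f) (hg : ConvexOn ℝ s g) :
    StrongConvexOn s m (f + g) :=
  (hf.add (uniformConvexOn_zero.mpr hg)).mono fun _ => by simp

lemma StrongConvexOn.add_mul_sq_norm_sub_le_of_isMinOn (hf : StrongConvexOn s m f)
    (hu : u ∈ s) (hv : v ∈ s) (hmin : IsMinOn f s u) :
    f u + m / 2 * ‖u - v‖ ^ 2 ≤ f v := by
  set d := m / 2 * ‖u - v‖ ^ 2
  -- Compare `f u` with `f` at `a • u + (1 - a) • v` and let `a → 1`.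
  have along_segment : ∀ a ∈ Set.Ioo (0 : ℝ) 1, a * d ≤ f v - f u := by
    rintro a ⟨ha₀, ha₁⟩
    have hb : 0 < 1 - a := sub_pos.mpr ha₁
    have hconv := hf.2 hu hv ha₀.le hb.le (add_sub_cancel a 1)
    have hmin' := isMinOn_iff.mp hmin _ (hf.1 hu hv ha₀.le hb.le (add_sub_cancel a 1))
    change _ ≤ a * f u + (1 - a) * f v - a * (1 - a) * d at hconv
    have : (1 - a) * f u ≤ (1 - a) * (f v - a * d) := by nlinarith
    linarith [le_of_mul_le_mul_left this hb]
  have hlim : Tendsto (fun a : ℝ => a * d) (𝓝[<] 1) (𝓝 d) :=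
    ((continuous_id.mul continuous_const).tendsto' 1 d (one_mul d)).mono_left nhdsWithin_le_nhds
  have := le_of_tendsto hlim (eventually_of_mem (Ioo_mem_nhdsLT zero_lt_one) along_segment)
  linarith

lemma StrongConvexOn.mul_norm_sub_le_of_isMinOn {K : ℝ} (hf : StrongConvexOn s m f)
    (hg : StrongConvexOn s m g) (hu : u ∈ s) (hv : v ∈ s) (hfu : IsMinOn f s u)
    (hgv : IsMinOn g s v) (hK : 0 ≤ K) (hfg : (f - g) v - (f - g) u ≤ K * ‖u - v‖) :
    m * ‖u - v‖ ≤ K := by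
  have growth_f := hf.add_mul_sq_norm_sub_le_of_isMinOn hu hv hfu
  have growth_g := hg.add_mul_sq_norm_sub_le_of_isMinOn hv hu hgv
  rw [norm_sub_rev] at growth_g
  simp only [Pi.sub_apply] at hfg
  rcases (norm_nonneg (u - v)).eq_or_lt with hd | hd
  · rwa [← hd, mul_zero]
  · exact le_of_mul_le_mul_right (by nlinarith) hd

end StrongConvexOn

lemma StrongConvexOn.mul_norm_sub_le_of_isMinOn_add {E : Type*} [NormedAddCommGroup E]
    [InnerProductSpace ℝ E] [CompleteSpace E] {s : Set E} {m K : ℝ} {φ ψ G : E → ℝ} {u v : E}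
    (hφ : StrongConvexOn s m φ) (hψ : StrongConvexOn s m ψ) (hG : ConvexOn ℝ s G)
    (hφd : ∀ z ∈ s, DifferentiableAt ℝ φ z) (hψd : ∀ z ∈ s, DifferentiableAt ℝ ψ z)
    (hK : 0 ≤ K) (hgrad : ∀ z ∈ s, ‖gradient φ z - gradient ψ z‖ ≤ K) (hu : u ∈ s) (hv : v ∈ s)
    (hφu : IsMinOn (φ + G) s u) (hψv : IsMinOn (ψ + G) s v) :
    m * ‖u - v‖ ≤ K := by
  have mean_value : ‖(φ - ψ) v - (φ - ψ) u‖ ≤ K * ‖v - u‖ :=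
    hφ.1.norm_image_sub_le_of_norm_gradient_le (fun z hz => (hφd z hz).sub (hψd z hz))
      (fun z hz => by rw [gradient_sub (hφd z hz) (hψd z hz)]; exact hgrad z hz) hu hv
  refine (hφ.add_convexOn hG).mul_norm_sub_le_of_isMinOn (hψ.add_convexOn hG) hu hv hφu hψv hK ?_
  have : φ + G - (ψ + G) = φ - ψ := add_sub_add_right_eq_sub φ ψ G
  rw [this, ← norm_sub_rev v u]
  exact (le_abs_self _).trans mean_value

theorem best_response_lipschitz_general
    {N : ℕ} {n : Fin N → ℕ} (Xi : ∀ i, Set (Blk n i))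
    (X : Set (Full n)) (Ftil : ∀ i, Blk n i → Full n → ℝ)
    -- G is separable with convex continuous blocks
    (Gi : ∀ i, Blk n i → ℝ)
    (hGi : ∀ i, ConvexOn ℝ (Xi i) (Gi i) ∧ ContinuousOn (Gi i) (Xi i))
    -- (F1) each F̃_i(·; w) is strongly convex on X_i with constant q > 0, and differentiable
    (q : ℝ) (hq : 0 < q)
    (hF1 : ∀ i, ∀ w ∈ X, StrongConvexOn (Xi i) q (fun z => Ftil i z w))
    (hFtildiff : ∀ i, ∀ w ∈ X, Differentiable ℝ (fun z => Ftil i z w))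
    -- (F3) ∇F̃_i(z; ·) is Lipschitz continuous on X, uniformly in z ∈ X_i
    (L_B : ℝ)
    (hF3 : ∀ i, ∀ z ∈ Xi i, ∀ w ∈ X, ∀ w' ∈ X,
      ‖gradient (fun u => Ftil i u w) z - gradient (fun u => Ftil i u w') z‖ ≤ L_B * ‖w - w'‖)
    -- the best-response map: x̂_i(y) minimizes F̃_i(·; y) + G_i(·) over X_i
    (xhat : Full n → Full n)
    (hxhat : ∀ y ∈ X, ∀ i, xhat y i ∈ Xi i ∧
      ∀ zi ∈ Xi i, Ftil i (xhat y i) y + Gi i (xhat y i) ≤ Ftil i zi y + Gi i zi) :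
    ∃ Lhat > (0 : ℝ), ∀ y ∈ X, ∀ w ∈ X, ‖xhat y - xhat w‖ ≤ Lhat * ‖y - w‖ := by
  set K := max L_B 0
  refine ⟨√N * K / q + 1, by positivity, fun y hy w hw => ?_⟩
  have block : ∀ i, ‖(xhat y - xhat w) i‖ ≤ K / q * ‖y - w‖ := fun i => by
    rw [PiLp.sub_apply, div_mul_eq_mul_div, le_div_iff₀' hq]
    exact (hF1 i y hy).mul_norm_sub_le_of_isMinOn_add (hF1 i w hw) (hGi i).1
      (fun z _ => hFtildiff i y hy z) (fun z _ => hFtildiff i w hw z) (by positivity)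
      (fun z hz => (hF3 i z hz y hy w hw).trans (by gcongr; exact le_max_left L_B 0))
      (hxhat y hy i).1 (hxhat w hw i).1
      (isMinOn_iff.mpr (hxhat y hy i).2) (isMinOn_iff.mpr (hxhat w hw i).2)
  calc ‖xhat y - xhat w‖ ≤ √(Fintype.card (Fin N)) * (K / q * ‖y - w‖) :=
        PiLp.norm_le_sqrt_card_mul _ (by positivity) block
    _ ≤ (√N * K / q + 1) * ‖y - w‖ := by
      rw [Fintype.card_fin, add_mul, one_mul, mul_div_assoc, mul_assoc]
      exact le_add_of_nonneg_right (norm_nonneg _)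

/-- **Lipschitz continuity of the best-response map (separable `G`).** If `G` is separable,
`G x = ∑ i, G_i (x_i)` with each `G_i` convex and continuous on `X_i`, then under F1–F3 the
best-response map `y ↦ x̂(y)` is Lipschitz continuous on `X`: there is `L̂ > 0` with
`‖x̂(y) − x̂(z)‖ ≤ L̂ ‖y − z‖` for all `y, z ∈ X`. -/
theorem best_response_lipschitz
    {N : ℕ} {n : Fin N → ℕ} (Xi : ∀ i, Set (Blk n i))
    (X : Set (Full n)) (hXdef : X = {x : Full n | ∀ i, x i ∈ Xi i})
    (F : Full n → ℝ) (Ftil : ∀ i, Blk n i → Full n → ℝ)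
    -- each X_i is nonempty, closed and convex
    (hXi : ∀ i, (Xi i).Nonempty ∧ IsClosed (Xi i) ∧ Convex ℝ (Xi i))
    -- F is C¹ on an open set containing X, with ∇F Lipschitz on X
    (U : Set (Full n)) (hUopen : IsOpen U) (hXU : X ⊆ U) (hFC1 : ContDiffOn ℝ 1 F U)
    (L_F : ℝ)
    (hLF : ∀ a ∈ X, ∀ b ∈ X, ‖gradient F a - gradient F b‖ ≤ L_F * ‖a - b‖)
    -- G is separable with convex continuous blocks
    (Gi : ∀ i, Blk n i → ℝ)
    (hGi : ∀ i, ConvexOn ℝ (Xi i) (Gi i) ∧ ContinuousOn (Gi i) (Xi i))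
    -- (F1) each F̃_i(·; w) is strongly convex on X_i with constant q > 0, and differentiable
    (q : ℝ) (hq : 0 < q)
    (hF1 : ∀ i, ∀ w ∈ X, StrongConvexOn (Xi i) q (fun z => Ftil i z w))
    (hFtildiff : ∀ i, ∀ w ∈ X, Differentiable ℝ (fun z => Ftil i z w))
    -- (F2) gradient consistency: ∇F̃_i(x_i; x) = ∇_{x_i} F(x) for all x ∈ X
    (hF2 : ∀ i, ∀ x ∈ X, gradient (fun z => Ftil i z x) (x i) = pgrad F x i)
    -- (F3) ∇F̃_i(z; ·) is Lipschitz continuous on X, uniformly in z ∈ X_i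
    (L_B : ℝ)
    (hF3 : ∀ i, ∀ z ∈ Xi i, ∀ w ∈ X, ∀ w' ∈ X,
      ‖gradient (fun u => Ftil i u w) z - gradient (fun u => Ftil i u w') z‖ ≤ L_B * ‖w - w'‖)
    -- the best-response map: x̂_i(y) minimizes F̃_i(·; y) + G_i(·) over X_i
    (xhat : Full n → Full n)
    (hxhat : ∀ y ∈ X, ∀ i, xhat y i ∈ Xi i ∧
      ∀ zi ∈ Xi i, Ftil i (xhat y i) y + Gi i (xhat y i) ≤ Ftil i zi y + Gi i zi) :
    ∃ Lhat > (0 : ℝ), ∀ y ∈ X, ∀ w ∈ X, ‖xhat y - xhat w‖ ≤ Lhat * ‖y - w‖ :=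
  best_response_lipschitz_general Xi X Ftil Gi hGi q hq hF1 hFtildiff L_B hF3 xhat hxhat
end

section
/- Let x ∈ X, let i_mx be an index attaining max_{i∈{1,…,N}} ‖x̂_i(x) − x_i‖, let S ⊆ {1,…,N} be a set containing i_mx, let ρ ∈ (0,1], and let Ŝ ⊆ S contain at least one index j with E_j(x) ≥ ρ · max_{i∈S} E_i(x). Then ‖(x̂(x) − x)_Ŝ‖ ≥ c₁ ‖x̂(x) − x‖, where (v)_Ŝ denotes the vector whose i-th block equals v_i if i ∈ Ŝ and zero otherwise, and c₁ = ρ (min_{i} s̲_i) / (N · max_{i} s̄_i) > 0. -/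
/-!
The largest block residual `M = ‖x̂_{i_mx}(x) − x_{i_mx}‖` controls the whole residual,
`‖x̂(x) − x‖ ≤ √N · M ≤ N · M`. Chaining the error bounds through the greedy choice `j ∈ Ŝ`,
`ρ s̲_{i_mx} M ≤ ρ E_{i_mx}(x) ≤ E_j(x) ≤ s̄_j ‖x̂_j(x) − x_j‖`, and the `j`-th block
residual is at most the norm of the restriction to `Ŝ`.
-/

open scoped RealInnerProductSpace
open Filter MeasureTheory ProbabilityTheory

theorem PiLp.norm_le_sqrt_card_mul_norm_apply {ι : Type*} [Fintype ι] {β : ι → Type*}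
    [∀ i, SeminormedAddCommGroup (β i)] (v : PiLp 2 β) {j : ι} (hj : ∀ i, ‖v i‖ ≤ ‖v j‖) :
    ‖v‖ ≤ √(Fintype.card ι) * ‖v j‖ := by
  rw [PiLp.norm_eq_of_L2, ← Real.sqrt_sq (norm_nonneg (v j)), ← Real.sqrt_mul (by positivity)]
  gcongr
  calc ∑ i, ‖v i‖ ^ 2 ≤ ∑ _i : ι, ‖v j‖ ^ 2 := by gcongr with i; exact hj i
    _ = _ := by simp

theorem mul_le_of_greedy_of_error_bound {ι : Type*} {a E slo shi : ι → ℝ}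
    (hE : ∀ i, slo i * a i ≤ E i ∧ E i ≤ shi i * a i) {ρ : ℝ} (hρ : 0 ≤ ρ) {S : Finset ι}
    {i j : ι} (hi : i ∈ S) (hj : ∀ k ∈ S, ρ * E k ≤ E j) :
    ρ * slo i * a i ≤ shi j * a j :=
  calc ρ * slo i * a i = ρ * (slo i * a i) := mul_assoc _ _ _
    _ ≤ ρ * E i := mul_le_mul_of_nonneg_left (hE i).1 hρ
    _ ≤ E j := hj i hi
    _ ≤ shi j * a j := (hE j).2

theorem greedy_subselection_bound_general
    {N : ℕ} {n : Fin N → ℕ}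
    (X : Set (Full n))
    -- a best-response map with values in the blocks X_i
    (xhat : Full n → Full n)
    -- error-bound functions with constants 0 < s̲_i ≤ s̄_i
    (E : Fin N → Full n → ℝ) (slo shi : Fin N → ℝ)
    (hs : ∀ i, 0 < slo i ∧ slo i ≤ shi i)
    (hE : ∀ i, ∀ y ∈ X,
      slo i * ‖xhat y i - y i‖ ≤ E i y ∧ E i y ≤ shi i * ‖xhat y i - y i‖)
    -- the data of the selection
    (x : Full n) (hx : x ∈ X)
    (imx : Fin N) (himx : ∀ i, ‖xhat x i - x i‖ ≤ ‖xhat x imx - x imx‖)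
    (S Shat : Finset (Fin N)) (himxS : imx ∈ S)
    (ρ : ℝ) (hρ : ρ ∈ Set.Ioc (0 : ℝ) 1)
    (hgreedy : ∃ i ∈ Shat, ∀ j ∈ S, ρ * E j x ≤ E i x) :
    ρ * (⨅ i, slo i) / (N * ⨆ i, shi i) * ‖xhat x - x‖ ≤
      ‖(show Full n from WithLp.toLp 2 (fun j => if j ∈ Shat then xhat x j - x j else 0))‖ := by
  obtain ⟨j, hjShat, hj⟩ := hgreedy
  set w : Full n := WithLp.toLp 2 (fun j => if j ∈ Shat then xhat x j - x j else 0)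
  have hN : (1 : ℝ) ≤ N := by exact_mod_cast imx.pos
  have hres : ‖xhat x - x‖ ≤ N * ‖xhat x imx - x imx‖ :=
    calc ‖xhat x - x‖ ≤ √N * ‖xhat x imx - x imx‖ := by
          simpa using PiLp.norm_le_sqrt_card_mul_norm_apply (xhat x - x) himx
      _ ≤ N * ‖xhat x imx - x imx‖ := by gcongr; exact Real.sqrt_le_self_iff.2 (Or.inr hN)
  have hw : ‖xhat x j - x j‖ ≤ ‖w‖ := by simpa [w, hjShat] using PiLp.norm_apply_le w j
  have hgreedy_chain : ρ * slo imx * ‖xhat x imx - x imx‖ ≤ shi j * ‖xhat x j - x j‖ :=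
    mul_le_of_greedy_of_error_bound (fun i => hE i x hx) hρ.1.le himxS hj
  have hslo : ⨅ i, slo i ≤ slo imx := ciInf_le (Finite.bddBelow_range _) imx
  have hshi : shi j ≤ ⨆ i, shi i := le_ciSup (Finite.bddAbove_range _) j
  have hshi_pos : 0 < ⨆ i, shi i := ((hs j).1.trans_le (hs j).2).trans_le hshi
  have hblock : ρ * slo imx * ‖xhat x imx - x imx‖ ≤ (⨆ i, shi i) * ‖w‖ :=
    hgreedy_chain.trans (mul_le_mul hshi hw (norm_nonneg _) hshi_pos.le)
  rw [div_mul_eq_mul_div, div_le_iff₀ (by positivity)]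
  calc ρ * (⨅ i, slo i) * ‖xhat x - x‖
      ≤ ρ * slo imx * (N * ‖xhat x imx - x imx‖) :=
        mul_le_mul (mul_le_mul_of_nonneg_left hslo hρ.1.le) hres (norm_nonneg _)
          (mul_nonneg hρ.1.le (hs imx).1.le)
    _ = N * (ρ * slo imx * ‖xhat x imx - x imx‖) := by ring
    _ ≤ N * ((⨆ i, shi i) * ‖w‖) := mul_le_mul_of_nonneg_left hblock (by positivity)
    _ = ‖w‖ * (N * ⨆ i, shi i) := by ring

/-- **Lower bound for the greedy subselection.** Let `x ∈ X`, let `i_mx` attain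
`max_i ‖x̂_i(x) − x_i‖`, let `S` contain `i_mx`, and let `Ŝ ⊆ S` contain at least one index `j`
with `E_j(x) ≥ ρ · max_{i ∈ S} E_i(x)`. Then
`‖(x̂(x) − x)_Ŝ‖ ≥ c₁ ‖x̂(x) − x‖` with `c₁ = ρ (min_i s̲_i) / (N · max_i s̄_i) > 0`, where
`(v)_Ŝ` has `i`-th block `v_i` for `i ∈ Ŝ` and zero otherwise. -/
theorem greedy_subselection_bound
    {N : ℕ} {n : Fin N → ℕ} (Xi : ∀ i, Set (Blk n i))
    (X : Set (Full n)) (hXdef : X = {x : Full n | ∀ i, x i ∈ Xi i})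
    (hXi : ∀ i, (Xi i).Nonempty ∧ IsClosed (Xi i) ∧ Convex ℝ (Xi i))
    -- a best-response map with values in the blocks X_i
    (xhat : Full n → Full n) (hxhatX : ∀ y ∈ X, ∀ i, xhat y i ∈ Xi i)
    -- error-bound functions with constants 0 < s̲_i ≤ s̄_i
    (E : Fin N → Full n → ℝ) (slo shi : Fin N → ℝ)
    (hs : ∀ i, 0 < slo i ∧ slo i ≤ shi i)
    (hE : ∀ i, ∀ y ∈ X,
      slo i * ‖xhat y i - y i‖ ≤ E i y ∧ E i y ≤ shi i * ‖xhat y i - y i‖)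
    -- the data of the selection
    (x : Full n) (hx : x ∈ X)
    (imx : Fin N) (himx : ∀ i, ‖xhat x i - x i‖ ≤ ‖xhat x imx - x imx‖)
    (S Shat : Finset (Fin N)) (himxS : imx ∈ S) (hsub : Shat ⊆ S)
    (ρ : ℝ) (hρ : ρ ∈ Set.Ioc (0 : ℝ) 1)
    (hgreedy : ∃ i ∈ Shat, ∀ j ∈ S, ρ * E j x ≤ E i x) :
    ρ * (⨅ i, slo i) / (N * ⨆ i, shi i) * ‖xhat x - x‖ ≤
      ‖(show Full n from WithLp.toLp 2 (fun j => if j ∈ Shat then xhat x j - x j else 0))‖ :=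
  greedy_subselection_bound_general X xhat E slo shi hs hE x hx imx himx S Shat himxS ρ hρ hgreedy
end

section
/- Suppose G is convex and globally Lipschitz continuous on X with constant L_G. Let x ∈ X, let Ŝ ⊆ {1,…,N}, let γ ∈ (0, 1/N], let ε_i ≥ 0 for i ∈ Ŝ, and let ẑ ∈ X be defined by ẑ_i = z_i for i ∈ Ŝ, where z_i ∈ X_i satisfies ‖z_i − x̂_i(x)‖ ≤ ε_i, and ẑ_i = x_i for i ∉ Ŝ. Then G( x + γ(ẑ − x) ) ≤ G(x) + γ L_G ∑_{i∈Ŝ} ε_i + γ ∑_{i∈Ŝ} [ G(x̂_i(x), x_{-i}) − G(x) ], where (x̂_i(x), x_{-i}) denotes the vector obtained from x by replacing its i-th block with x̂_i(x). -/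
open scoped RealInnerProductSpace
open Filter MeasureTheory ProbabilityTheory

/-!
Writing `ẑ - x = ∑_{i ∈ Ŝ} ((x with block i set to z_i) - x)` exhibits the new point as the
convex combination `(1 - γ|Ŝ|) x + γ ∑_{i ∈ Ŝ} (x with block i set to z_i)`, whose weights are
admissible because `γ|Ŝ| ≤ γN ≤ 1`. Jensen's inequality bounds `G` there, and on each block
the Lipschitz bound trades `z_i` for `x̂_i(x)` at cost `L_G ε_i`, since two points that differ
in a single block are exactly as far apart as those blocks.
-/

open Finset

theorem ConvexOn.map_add_sum_smul_sub_le {E ι : Type*} [AddCommGroup E] [Module ℝ E]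
    {s : Set E} {f : E → ℝ} (hf : ConvexOn ℝ s f) {t : Finset ι} {x : E} (hx : x ∈ s)
    {y : ι → E} (hy : ∀ i ∈ t, y i ∈ s) {γ : ℝ} (hγ : 0 ≤ γ) (hγt : γ * #t ≤ 1) :
    f (x + ∑ i ∈ t, γ • (y i - x)) ≤ f x + γ * ∑ i ∈ t, (f (y i) - f x) := by
  have hcomb : x + ∑ i ∈ t, γ • (y i - x) = (1 - γ * #t) • x + ∑ i ∈ t, γ • y i := by
    simp only [smul_sub, sum_sub_distrib, sum_const, ← Nat.cast_smul_eq_nsmul ℝ, smul_smul]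
    module
  have hjensen := hf.map_add_sum_le (v := 1 - γ * #t) (fun _ _ => hγ)
    (by rw [sum_const, nsmul_eq_mul]; ring) hy (by linarith) hx
  rw [hcomb]
  refine hjensen.trans_eq ?_
  simp only [smul_eq_mul, ← mul_sum, sum_sub_distrib, sum_const, nsmul_eq_mul]
  ring

lemma mul_le_one_of_le_one_div {γ : ℝ} {N : ℕ} (hγ : γ ≤ 1 / N) : γ * N ≤ 1 := by
  rcases N.eq_zero_or_pos with rfl | hN
  · simp
  · exact (le_div_iff₀ (by exact_mod_cast hN)).mp hγ

section Blocks

variable {N : ℕ} {n : Fin N → ℕ}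

lemma upd_sub_upd (x : Full n) (i : Fin N) (a b : Blk n i) :
    upd x i a - upd x i b = PiLp.single 2 i (a - b) := by
  ext j : 1
  by_cases hj : j = i
  · subst hj; simp [upd]
  · simp [upd, hj]

lemma norm_upd_sub_upd (x : Full n) (i : Fin N) (a b : Blk n i) :
    ‖upd x i a - upd x i b‖ = ‖a - b‖ := by
  rw [upd_sub_upd, PiLp.norm_single]

lemma upd_self (x : Full n) (i : Fin N) : upd x i (x i) = x := by
  simp [upd]

lemma upd_sub_self (x : Full n) (i : Fin N) (v : Blk n i) :
    upd x i v - x = PiLp.single 2 i (v - x i) := by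
  simpa only [upd_self] using upd_sub_upd x i v (x i)

lemma toLp_ite_sub_eq_sum_upd_sub (x : Full n) (z : ∀ i, Blk n i) (S : Finset (Fin N)) :
    (show Full n from WithLp.toLp 2 (fun j => if j ∈ S then z j else x j)) - x =
      ∑ i ∈ S, (upd x i (z i) - x) := by
  simp only [upd_sub_self]
  ext j : 1
  simp only [PiLp.sub_apply, WithLp.ofLp_sum, PiLp.ofLp_single, Finset.sum_apply, sum_pi_single]
  split_ifs <;> simp

lemma upd_mem_pi {Xi : ∀ i, Set (Blk n i)} {x : Full n} (hx : ∀ j, x j ∈ Xi j) {i : Fin N}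
    {v : Blk n i} (hv : v ∈ Xi i) : ∀ j, upd x i v j ∈ Xi j := by
  intro j
  by_cases hj : j = i
  · subst hj; simpa [upd] using hv
  · simpa [upd, hj] using hx j

end Blocks

theorem G_one_step_bound_general
    {N : ℕ} {n : Fin N → ℕ} (Xi : ∀ i, Set (Blk n i))
    (X : Set (Full n)) (hXdef : X = {x : Full n | ∀ i, x i ∈ Xi i})
    (G : Full n → ℝ) (Ftil : ∀ i, Blk n i → Full n → ℝ)
    -- G is convex and globally Lipschitz continuous on X with constant L_G
    (hGconv : ConvexOn ℝ X G)
    (L_G : ℝ) (hLG : 0 ≤ L_G)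
    (hGlip : ∀ a ∈ X, ∀ b ∈ X, |G a - G b| ≤ L_G * ‖a - b‖)
    -- the best-response map: x̂_i(x) minimizes F̃_i(·; x) + G(·, x_{-i}) over X_i
    (xhat : Full n → Full n)
    (hxhat : ∀ y ∈ X, ∀ i, xhat y i ∈ Xi i ∧
      ∀ zi ∈ Xi i, Ftil i (xhat y i) y + G (upd y i (xhat y i)) ≤ Ftil i zi y + G (upd y i zi))
    -- the data of one step
    (x : Full n) (hx : x ∈ X)
    (Shat : Finset (Fin N))
    (γ : ℝ) (hγ : γ ∈ Set.Ioc (0 : ℝ) (1 / (N : ℝ)))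
    (ε : Fin N → ℝ)
    (z : ∀ i, Blk n i)
    (hz : ∀ i ∈ Shat, z i ∈ Xi i ∧ ‖z i - xhat x i‖ ≤ ε i) :
    G (x + γ • ((show Full n from WithLp.toLp 2 (fun j => if j ∈ Shat then z j else x j)) - x)) ≤
      G x + γ * L_G * ∑ i ∈ Shat, ε i +
        γ * ∑ i ∈ Shat, (G (upd x i (xhat x i)) - G x) := by
  obtain ⟨hγ0, hγN⟩ := hγ
  subst hXdef
  have hγS : γ * #Shat ≤ 1 := by
    have hS : (#Shat : ℝ) ≤ N := by simpa using card_le_univ Shat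
    exact (mul_le_mul_of_nonneg_left hS hγ0.le).trans (mul_le_one_of_le_one_div hγN)
  have hblock : ∀ i ∈ Shat,
      G (upd x i (z i)) - G x ≤ (G (upd x i (xhat x i)) - G x) + L_G * ε i := by
    intro i hi
    have hGz := (le_abs_self _).trans
      (hGlip _ (upd_mem_pi hx (hz i hi).1) _ (upd_mem_pi hx (hxhat x hx i).1))
    rw [norm_upd_sub_upd] at hGz
    linarith [mul_le_mul_of_nonneg_left (hz i hi).2 hLG]
  rw [toLp_ite_sub_eq_sum_upd_sub, smul_sum]
  calc _ ≤ G x + γ * ∑ i ∈ Shat, (G (upd x i (z i)) - G x) :=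
        hGconv.map_add_sum_smul_sub_le hx (fun i hi => upd_mem_pi hx (hz i hi).1) hγ0.le hγS
    _ ≤ G x + γ * ∑ i ∈ Shat, ((G (upd x i (xhat x i)) - G x) + L_G * ε i) := by
        gcongr with i hi
        exact hblock i hi
    _ = _ := by rw [sum_add_distrib, ← mul_sum]; ring

/-- **One-step bound on `G` (Lemma 6).** Suppose `G` is convex and globally Lipschitz on `X`
with constant `L_G`. With `ẑ_i = z_i` (`‖z_i − x̂_i(x)‖ ≤ ε_i`) for `i ∈ Ŝ` and `ẑ_i = x_i`
otherwise, and `γ ∈ (0, 1/N]`, one has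
`G(x + γ(ẑ − x)) ≤ G(x) + γ L_G ∑_{i∈Ŝ} ε_i + γ ∑_{i∈Ŝ} [G(x̂_i(x), x_{-i}) − G(x)]`. -/
theorem G_one_step_bound
    {N : ℕ} {n : Fin N → ℕ} (Xi : ∀ i, Set (Blk n i))
    (X : Set (Full n)) (hXdef : X = {x : Full n | ∀ i, x i ∈ Xi i})
    (F G : Full n → ℝ) (Ftil : ∀ i, Blk n i → Full n → ℝ)
    -- each X_i is nonempty, closed and convex
    (hXi : ∀ i, (Xi i).Nonempty ∧ IsClosed (Xi i) ∧ Convex ℝ (Xi i))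
    -- G is convex and globally Lipschitz continuous on X with constant L_G
    (hGconv : ConvexOn ℝ X G)
    (L_G : ℝ) (hLG : 0 ≤ L_G)
    (hGlip : ∀ a ∈ X, ∀ b ∈ X, |G a - G b| ≤ L_G * ‖a - b‖)
    -- the strongly convex surrogates (constant q > 0, gradient-consistent with F)
    (q : ℝ) (hq : 0 < q)
    (hF1 : ∀ i, ∀ w ∈ X, StrongConvexOn (Xi i) q (fun z => Ftil i z w))
    (hFtildiff : ∀ i, ∀ w ∈ X, Differentiable ℝ (fun z => Ftil i z w))
    (hF2 : ∀ i, ∀ x ∈ X, gradient (fun z => Ftil i z x) (x i) = pgrad F x i)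
    -- the best-response map: x̂_i(x) minimizes F̃_i(·; x) + G(·, x_{-i}) over X_i
    (xhat : Full n → Full n)
    (hxhat : ∀ y ∈ X, ∀ i, xhat y i ∈ Xi i ∧
      ∀ zi ∈ Xi i, Ftil i (xhat y i) y + G (upd y i (xhat y i)) ≤ Ftil i zi y + G (upd y i zi))
    -- the data of one step
    (x : Full n) (hx : x ∈ X)
    (Shat : Finset (Fin N))
    (γ : ℝ) (hγ : γ ∈ Set.Ioc (0 : ℝ) (1 / (N : ℝ)))
    (ε : Fin N → ℝ) (hε : ∀ i ∈ Shat, 0 ≤ ε i)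
    (z : ∀ i, Blk n i)
    (hz : ∀ i ∈ Shat, z i ∈ Xi i ∧ ‖z i - xhat x i‖ ≤ ε i) :
    G (x + γ • ((show Full n from WithLp.toLp 2 (fun j => if j ∈ Shat then z j else x j)) - x)) ≤
      G x + γ * L_G * ∑ i ∈ Shat, ε i +
        γ * ∑ i ∈ Shat, (G (upd x i (xhat x i)) - G x) :=
  G_one_step_bound_general Xi X hXdef G Ftil hGconv L_G hLG hGlip xhat hxhat x hx Shat γ hγ ε z hz
end
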